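/- Suppose all weights are equal to 1 (W_{kl} = 1 for all l > k) and 0 < μ ≤ γ ≤ 2μ. Fix (i,j) and a vector Θ⋆_ij ∈ ℝ^K with at least one nonzero entry. Then for every row index u ∈ S_B^c, the ℓ₁-norm bound ‖B_{u:} (B_{S_B:}ᵀ B_{S_B:})⁻¹ B_{S_B:}ᵀ‖₁ ≤ 4 holds; equivalently, ‖B_{S_B^c:} B_{S_B:}^†‖_∞ ≤ 4, so that the compatibility constant satisfies κ_IC ≤ 5. -/

import Mathlib

open scoped Classical
open Matrix

/-- The Moore–Penrose pseudoinverse of a real matrix, characterized by the four Penrose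
conditions (which determine it uniquely; it always exists for real matrices). -/
noncomputable def moorePenrose {m n : Type*} [Fintype m] [Fintype n]
    (B : Matrix m n ℝ) : Matrix n m ℝ :=
  if h : ∃ X : Matrix n m ℝ,
      B * X * B = B ∧ X * B * X = X ∧ (B * X)ᵀ = B * X ∧ (X * B)ᵀ = X * B then
    h.choose
  else 0

/-- The matrix `B = [(γ/μ)GA ; I_K]` for `q = 1`. -/
noncomputable def Bmat (K : ℕ) (W : Fin K → Fin K → ℝ) (γ μ : ℝ) :
    Matrix ({p : Fin K × Fin K // p.1 < p.2} ⊕ Fin K) (Fin K) ℝ :=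
  Matrix.of fun r c =>
    match r with
    | Sum.inl p => γ / μ * (W p.val.1 p.val.2 *
        (if c = p.val.1 then 1 else if c = p.val.2 then -1 else 0))
    | Sum.inr k => if c = k then 1 else 0

/-- The support `S_B` of `BΘ⋆`. -/
noncomputable def suppB (K : ℕ) (W : Fin K → Fin K → ℝ) (γ μ : ℝ) (Θ : Fin K → ℝ) :
    Finset ({p : Fin K × Fin K // p.1 < p.2} ⊕ Fin K) :=
  Finset.univ.filter fun r => ((Bmat K W γ μ) *ᵥ Θ) r ≠ 0

/-- The submatrix `B_{S_B:}` of rows of `B` indexed by `S_B`. -/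
noncomputable def BmatS (K : ℕ) (W : Fin K → Fin K → ℝ) (γ μ : ℝ) (Θ : Fin K → ℝ) :
    Matrix {x // x ∈ suppB K W γ μ Θ} (Fin K) ℝ :=
  (Bmat K W γ μ).submatrix Subtype.val id

/-- The sign vector `sign((BΘ⋆)_{S_B})`. -/
noncomputable def signBS (K : ℕ) (W : Fin K → Fin K → ℝ) (γ μ : ℝ) (Θ : Fin K → ℝ) :
    {x // x ∈ suppB K W γ μ Θ} → ℝ :=
  fun r => Real.sign (((Bmat K W γ μ) *ᵥ Θ) r.val)

/-!
Write `c = γ / μ` and `M = B_Sᵀ B_S`. With unit weights, `M` is `c²` times the Laplacian of the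
graph joining `i` and `j` whenever `Θ i ≠ Θ j`, plus the diagonal projection onto
`{i | Θ i ≠ 0}`; it is positive definite as soon as some `Θ k ≠ 0`. Since `M⁻¹ = (M⁻¹)ᵀ`, the row
`B_u M⁻¹ B_Sᵀ` is `B_S w` for the solution `w` of `M w = B_uᵀ`, and for `u ∉ S_B` this solution is
explicit:
* `u = e_k` with `Θ k = 0`: `w = (c² N)⁻¹ e_k + N⁻¹ 𝟙`, where `N = #{i | Θ i ≠ 0}`;
* `u = c (e_k - e_l)` with `Θ k = Θ l`: `e_k - e_l` is an eigenvector of `M` with eigenvalue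
  `c² d + [Θ k ≠ 0]`, where `d = #{i | Θ i ≠ Θ k}`.
As `‖B_S e_k‖₁ = c d + [Θ k ≠ 0]` and `‖B_S 𝟙‖₁ = N`, the triangle inequality bounds `‖B_S w‖₁` by
`c⁻¹ + 1` and `2 max c 1` respectively, and both are at most `4` when `1 ≤ c ≤ 2`.
-/

theorem penrose_unique {m n : Type*} [Fintype m] [Fintype n] {B : Matrix m n ℝ}
    {X Y : Matrix n m ℝ} (hX₁ : B * X * B = B) (hX₂ : X * B * X = X) (hX₃ : (B * X)ᵀ = B * X)
    (hX₄ : (X * B)ᵀ = X * B) (hY₁ : B * Y * B = B) (hY₂ : Y * B * Y = Y)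
    (hY₃ : (B * Y)ᵀ = B * Y) (hY₄ : (Y * B)ᵀ = Y * B) : X = Y := by
  have hBX : B * X = B * Y :=
    calc B * X = (B * Y * B * X)ᵀ := by rw [hY₁, hX₃]
      _ = (B * X)ᵀ * (B * Y)ᵀ := by rw [← transpose_mul, ← Matrix.mul_assoc]
      _ = B * X * (B * Y) := by rw [hX₃, hY₃]
      _ = B * Y := by rw [← Matrix.mul_assoc, hX₁]
  have hXB : X * B = Y * B :=
    calc X * B = (X * B * Y * B)ᵀ := by
          rw [show X * B * Y * B = X * (B * Y * B) by simp only [Matrix.mul_assoc], hY₁, hX₄]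
      _ = (Y * B)ᵀ * (X * B)ᵀ := by rw [← transpose_mul, ← Matrix.mul_assoc]
      _ = Y * B * (X * B) := by rw [hX₄, hY₄]
      _ = Y * B := by
          rw [show Y * B * (X * B) = Y * (B * X * B) by simp only [Matrix.mul_assoc], hX₁]
  calc X = Y * (B * X) := by rw [← Matrix.mul_assoc, ← hXB, hX₂]
    _ = Y := by rw [hBX, ← Matrix.mul_assoc, hY₂]

theorem moorePenrose_eq_inv_mul_transpose {m n : Type*} [Fintype m] [Fintype n]
    [DecidableEq n] {B : Matrix m n ℝ} (h : IsUnit (Bᵀ * B).det) :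
    moorePenrose B = (Bᵀ * B)⁻¹ * Bᵀ := by
  set X := (Bᵀ * B)⁻¹ * Bᵀ
  have hXB : X * B = 1 := by rw [Matrix.mul_assoc, Matrix.nonsing_inv_mul _ h]
  have hBX : (B * X)ᵀ = B * X := by
    rw [transpose_mul, transpose_mul, transpose_nonsing_inv, transpose_mul, transpose_transpose,
      Matrix.mul_assoc]
  have hX : B * X * B = B ∧ X * B * X = X ∧ (B * X)ᵀ = B * X ∧ (X * B)ᵀ = X * B := by
    refine ⟨?_, ?_, hBX, ?_⟩ <;> simp [Matrix.mul_assoc, hXB]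
  have hex : ∃ Y : Matrix n m ℝ,
      B * Y * B = B ∧ Y * B * Y = Y ∧ (B * Y)ᵀ = B * Y ∧ (Y * B)ᵀ = Y * B := ⟨X, hX⟩
  obtain ⟨h₁, h₂, h₃, h₄⟩ := hex.choose_spec
  rw [moorePenrose, dif_pos hex]
  exact penrose_unique h₁ h₂ h₃ h₄ hX.1 hX.2.1 hX.2.2.1 hX.2.2.2

theorem isUnit_det_transpose_mul_self {m n : Type*} [Fintype m] [Fintype n]
    [DecidableEq n] {B : Matrix m n ℝ} (hB : Function.Injective B.mulVec) : IsUnit (Bᵀ * B).det :=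
  (PosDef.conjTranspose_mul_self B hB).det_pos.ne'.isUnit

theorem vecMul_inv_transpose_mul_self_vecMul_transpose {m n : Type*} [Fintype m] [Fintype n]
    [DecidableEq n] {B : Matrix m n ℝ} (h : IsUnit (Bᵀ * B).det) {v w : n → ℝ}
    (hw : (Bᵀ * B) *ᵥ w = v) :
    v ᵥ* (Bᵀ * B)⁻¹ ᵥ* Bᵀ = B *ᵥ w := by
  have hsymm : ((Bᵀ * B)⁻¹)ᵀ = (Bᵀ * B)⁻¹ := by
    rw [transpose_nonsing_inv, transpose_mul, transpose_transpose]
  rw [vecMul_transpose]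
  congr 1
  rw [← hsymm, vecMul_transpose, ← hw, mulVec_mulVec, Matrix.nonsing_inv_mul _ h, one_mulVec]

theorem transpose_mul_self_mulVec_apply {m n : Type*} [Fintype m] [Fintype n] [DecidableEq n]
    (B : Matrix m n ℝ) (w : n → ℝ) (j : n) :
    ((Bᵀ * B) *ᵥ w) j = ∑ s, (B *ᵥ Pi.single j 1) s * (B *ᵥ w) s := by
  rw [← mulVec_mulVec, mulVec_single_one]
  rfl

theorem sum_abs_smul_add_smul_le {ι : Type*} [Fintype ι] (a b : ℝ) (x y : ι → ℝ) :
    ∑ i, |(a • x + b • y) i| ≤ |a| * ∑ i, |x i| + |b| * ∑ i, |y i| := by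
  simp only [Finset.mul_sum, ← Finset.sum_add_distrib]
  exact Finset.sum_le_sum fun i _ => by simpa [abs_mul] using abs_add_le (a * x i) (b * y i)

section PairSums

open Finset

variable {α : Type*} [Fintype α] [LinearOrder α]

theorem sum_subtype_lt (f : α → α → ℝ) :
    ∑ p : {p : α × α // p.1 < p.2}, f p.1.1 p.1.2 = ∑ a, ∑ b, if a < b then f a b else 0 := by
  rw [← Finset.sum_subtype (univ.filter fun p : α × α => p.1 < p.2) (by simp)
    (fun p => f p.1 p.2), sum_filter, Fintype.sum_prod_type]

theorem sum_lt_eq_sum_erase {g : α → α → ℝ} (hsymm : ∀ a b, g a b = g b a) {j : α}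
    (hg : ∀ a b, a ≠ j → b ≠ j → g a b = 0) :
    ∑ a, ∑ b, (if a < b then g a b else 0) = ∑ b ∈ univ.erase j, g j b := by
  have split : ∀ a b, (if a < b then g a b else 0) =
      (if a = j then (if j < b then g j b else 0) else 0) +
        (if b = j then (if a < j then g j a else 0) else 0) := by
    intro a b
    by_cases ha : a = j <;> by_cases hb : b = j
    · simp [ha, hb]
    · simp [ha, hb]
    · subst hb
      rw [hsymm a b]
      simp [ha]
    · simp [ha, hb, hg a b ha hb]
  rw [sum_congr rfl fun a _ => sum_congr rfl fun b _ => split a b]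
  simp only [sum_add_distrib, sum_ite_eq', mem_univ, if_true]
  rw [sum_comm, ← sum_add_distrib]
  simp only [sum_ite_eq', mem_univ, if_true]
  rw [← filter_ne', sum_filter]
  refine sum_congr rfl fun b _ => ?_
  rcases lt_trichotomy j b with h | rfl | h
  · simp [h, h.ne', h.not_gt]
  · simp
  · simp [h, h.ne, h.not_gt]

end PairSums

section UnitWeights

open Finset

variable {K : ℕ} {W : Fin K → Fin K → ℝ} {γ μ : ℝ} {Θ : Fin K → ℝ}

theorem Bmat_mulVec_inl (hW : ∀ k l : Fin K, k < l → W k l = 1) (w : Fin K → ℝ)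
    (p : {p : Fin K × Fin K // p.1 < p.2}) :
    (Bmat K W γ μ *ᵥ w) (Sum.inl p) = γ / μ * (w p.1.1 - w p.1.2) := by
  have hne : p.1.2 ≠ p.1.1 := p.2.ne'
  simp only [mulVec, dotProduct, Bmat, mul_ite, mul_one, mul_neg, mul_zero, of_apply, hW _ _ p.2,
    ite_mul, neg_mul, zero_mul, sum_ite, filter_eq', mem_univ, ↓reduceIte, ← mul_sum, sum_singleton,
    filter_ne', mem_erase, ne_eq, hne, not_false_eq_true, and_self, sum_const_zero, add_zero]
  ring

theorem Bmat_mulVec_inr (w : Fin K → ℝ) (k : Fin K) :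
    (Bmat K W γ μ *ᵥ w) (Sum.inr k) = w k := by
  simp [Bmat, mulVec, dotProduct]

theorem Bmat_inl (hW : ∀ k l : Fin K, k < l → W k l = 1)
    (p : {p : Fin K × Fin K // p.1 < p.2}) :
    Bmat K W γ μ (Sum.inl p) = (γ / μ) • (Pi.single p.1.1 1 - Pi.single p.1.2 1) := by
  ext j
  by_cases h₁ : j = p.1.1
  · simp [Bmat, hW _ _ p.2, h₁, p.2.ne]
  · by_cases h₂ : j = p.1.2 <;> simp [Bmat, hW _ _ p.2, h₁, h₂, p.2.ne']

theorem Bmat_inr (k : Fin K) : Bmat K W γ μ (Sum.inr k) = Pi.single k 1 := by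
  ext j
  simp [Bmat, Pi.single_apply]

theorem BmatS_mulVec_apply (w : Fin K → ℝ) (s : {x // x ∈ suppB K W γ μ Θ}) :
    (BmatS K W γ μ Θ *ᵥ w) s = (Bmat K W γ μ *ᵥ w) s.1 := rfl

theorem mem_suppB_inl (hW : ∀ k l : Fin K, k < l → W k l = 1) (hc : γ / μ ≠ 0)
    (p : {p : Fin K × Fin K // p.1 < p.2}) :
    Sum.inl p ∈ suppB K W γ μ Θ ↔ Θ p.1.1 ≠ Θ p.1.2 := by
  simp [suppB, Bmat_mulVec_inl hW, hc, sub_eq_zero]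

theorem mem_suppB_inr (k : Fin K) : Sum.inr k ∈ suppB K W γ μ Θ ↔ Θ k ≠ 0 := by
  simp [suppB, Bmat_mulVec_inr]

theorem BmatS_mulVec_injective (hW : ∀ k l : Fin K, k < l → W k l = 1) (hc : γ / μ ≠ 0)
    (hΘ : ∃ k, Θ k ≠ 0) : Function.Injective (BmatS K W γ μ Θ).mulVec := by
  intro x y hxy
  set v := x - y
  have hv : BmatS K W γ μ Θ *ᵥ v = 0 := by rw [mulVec_sub, hxy, sub_self]
  have hsingle : ∀ i, Θ i ≠ 0 → v i = 0 := by
    intro i hi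
    simpa only [BmatS_mulVec_apply, Bmat_mulVec_inr, Pi.zero_apply] using
      congrFun hv ⟨_, (mem_suppB_inr i).mpr hi⟩
  have hpair : ∀ a b, Θ a ≠ Θ b → v a = v b := by
    intro a b hab
    wlog hlt : a < b generalizing a b
    · exact (this b a (Ne.symm hab) ((ne_of_apply_ne Θ hab).lt_or_gt.resolve_left hlt)).symm
    simpa only [BmatS_mulVec_apply, Bmat_mulVec_inl hW, Pi.zero_apply, mul_eq_zero, hc,
      false_or, sub_eq_zero] using congrFun hv ⟨_, (mem_suppB_inl hW hc ⟨(a, b), hlt⟩).mpr hab⟩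
  obtain ⟨k, hk⟩ := hΘ
  have hv₀ : v = 0 := funext fun j => by
    by_cases hj : Θ j = 0
    · rw [Pi.zero_apply, hpair j k (by rw [hj]; exact Ne.symm hk), hsingle k hk]
    · exact hsingle j hj
  exact sub_eq_zero.mp hv₀

theorem sum_suppB (hW : ∀ k l : Fin K, k < l → W k l = 1) (hc : γ / μ ≠ 0)
    (F : {p : Fin K × Fin K // p.1 < p.2} ⊕ Fin K → ℝ) :
    ∑ s : {x // x ∈ suppB K W γ μ Θ}, F s.1 =
      ∑ p : {p : Fin K × Fin K // p.1 < p.2}, (if Θ p.1.1 ≠ Θ p.1.2 then F (Sum.inl p) else 0) +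
        ∑ k, if Θ k ≠ 0 then F (Sum.inr k) else 0 := by
  rw [sum_coe_sort, suppB, sum_filter, Fintype.sum_sum_type]
  simp only [Bmat_mulVec_inl hW, Bmat_mulVec_inr, ne_eq, mul_eq_zero, hc, sub_eq_zero, false_or]

theorem gram_mulVec_apply (hW : ∀ k l : Fin K, k < l → W k l = 1) (hc : γ / μ ≠ 0)
    (w : Fin K → ℝ) (j : Fin K) :
    (((BmatS K W γ μ Θ)ᵀ * BmatS K W γ μ Θ) *ᵥ w) j =
      (γ / μ) ^ 2 * ∑ i, (if Θ j ≠ Θ i then w j - w i else 0) + if Θ j ≠ 0 then w j else 0 := by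
  rw [transpose_mul_self_mulVec_apply]
  simp only [BmatS_mulVec_apply]
  rw [sum_suppB hW hc (fun r => (Bmat K W γ μ *ᵥ Pi.single j 1) r * (Bmat K W γ μ *ᵥ w) r)]
  simp only [Bmat_mulVec_inl hW, Bmat_mulVec_inr]
  set e : Fin K → ℝ := Pi.single j 1
  rw [sum_subtype_lt fun a b =>
      if Θ a ≠ Θ b then γ / μ * (e a - e b) * (γ / μ * (w a - w b)) else 0,
    sum_lt_eq_sum_erase (j := j) ?symm ?vanish]
  case symm =>
    intro a b
    by_cases h : Θ a = Θ b
    · simp [h]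
    · simp only [ne_eq, h, Ne.symm h, not_false_eq_true, if_true]
      ring
  case vanish =>
    intro a b ha hb
    simp [e, ha, hb]
  have hpairs : ∑ b ∈ univ.erase j,
      (if Θ j ≠ Θ b then γ / μ * (e j - e b) * (γ / μ * (w j - w b)) else 0) =
        (γ / μ) ^ 2 * ∑ i, if Θ j ≠ Θ i then w j - w i else 0 := by
    rw [mul_sum, ← sum_erase univ (a := j) (by simp)]
    refine sum_congr rfl fun b hb => ?_
    simp only [e, Pi.single_apply, ne_of_mem_erase hb, if_true, if_false, mul_ite, mul_zero]
    ring_nf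
  have hsingles : ∑ k, (if Θ k ≠ 0 then e k * w k else 0) = if Θ j ≠ 0 then w j else 0 := by
    rw [sum_eq_single j (fun k _ hk => by simp [e, hk]) (by simp)]
    simp [e]
  rw [hpairs, hsingles]

theorem gram_mulVec_single (hW : ∀ k l : Fin K, k < l → W k l = 1) (hc : γ / μ ≠ 0)
    (k j : Fin K) :
    (((BmatS K W γ μ Θ)ᵀ * BmatS K W γ μ Θ) *ᵥ Pi.single k 1) j =
      (γ / μ) ^ 2 * ((if j = k then (#{i | Θ k ≠ Θ i} : ℝ) else 0) - if Θ j ≠ Θ k then 1 else 0) +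
        if j = k ∧ Θ k ≠ 0 then 1 else 0 := by
  rw [gram_mulVec_apply hW hc]
  set e : Fin K → ℝ := Pi.single k 1
  by_cases hjk : j = k
  · subst hjk
    have hdeg : ∑ i, (if Θ j ≠ Θ i then e j - e i else 0) = #{i | Θ j ≠ Θ i} := by
      rw [natCast_card_filter]
      refine sum_congr rfl fun i _ => ?_
      by_cases h : Θ j = Θ i
      · simp [h]
      · have hij : i ≠ j := fun hij => h (by rw [hij])
        simp [e, h, hij]
    rw [hdeg]
    simp [e]
  · have hcol : ∑ i, (if Θ j ≠ Θ i then e j - e i else 0) = -if Θ j ≠ Θ k then 1 else 0 := by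
      rw [sum_eq_single k (fun i _ hik => by simp [e, hik, hjk]) (by simp)]
      simp [e, hjk, apply_ite]
    rw [hcol]
    simp [e, hjk]

theorem gram_mulVec_one (hW : ∀ k l : Fin K, k < l → W k l = 1) (hc : γ / μ ≠ 0) (j : Fin K) :
    (((BmatS K W γ μ Θ)ᵀ * BmatS K W γ μ Θ) *ᵥ fun _ => 1) j = if Θ j ≠ 0 then 1 else 0 := by
  simp [gram_mulVec_apply hW hc]

theorem sum_abs_BmatS_mulVec (hW : ∀ k l : Fin K, k < l → W k l = 1) (hc : 0 < γ / μ)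
    (w : Fin K → ℝ) :
    ∑ s, |(BmatS K W γ μ Θ *ᵥ w) s| =
      γ / μ * ∑ p : {p : Fin K × Fin K // p.1 < p.2},
          (if Θ p.1.1 ≠ Θ p.1.2 then |w p.1.1 - w p.1.2| else 0) +
        ∑ k, if Θ k ≠ 0 then |w k| else 0 := by
  simp only [BmatS_mulVec_apply]
  rw [sum_suppB hW hc.ne' (fun r => |(Bmat K W γ μ *ᵥ w) r|)]
  simp only [Bmat_mulVec_inl hW, Bmat_mulVec_inr, abs_mul, abs_of_pos hc, mul_sum, mul_ite,
    mul_zero]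

theorem sum_abs_BmatS_mulVec_single (hW : ∀ k l : Fin K, k < l → W k l = 1) (hc : 0 < γ / μ)
    (k : Fin K) :
    ∑ s, |(BmatS K W γ μ Θ *ᵥ Pi.single k 1) s| =
      γ / μ * #{i | Θ k ≠ Θ i} + if Θ k ≠ 0 then 1 else 0 := by
  set e : Fin K → ℝ := Pi.single k 1
  rw [sum_abs_BmatS_mulVec hW hc,
    sum_subtype_lt fun a b => if Θ a ≠ Θ b then |e a - e b| else 0,
    sum_lt_eq_sum_erase (j := k) ?symm ?vanish]
  case symm =>
    intro a b
    by_cases h : Θ a = Θ b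
    · simp [h]
    · simp [h, Ne.symm h, abs_sub_comm]
  case vanish =>
    intro a b ha hb
    simp [e, ha, hb]
  have hpairs :
      ∑ b ∈ univ.erase k, (if Θ k ≠ Θ b then |e k - e b| else 0) = #{i | Θ k ≠ Θ i} := by
    rw [natCast_card_filter, ← sum_erase univ (a := k) (by simp)]
    refine sum_congr rfl fun b hb => ?_
    simp [e, ne_of_mem_erase hb]
  have hsingles : ∑ i, (if Θ i ≠ 0 then |e i| else 0) = if Θ k ≠ 0 then 1 else 0 := by
    rw [sum_eq_single k (fun i _ hik => by simp [e, hik]) (by simp)]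
    simp [e]
  rw [hpairs, hsingles]

theorem sum_abs_BmatS_mulVec_one (hW : ∀ k l : Fin K, k < l → W k l = 1) (hc : 0 < γ / μ) :
    ∑ s, |(BmatS K W γ μ Θ *ᵥ fun _ => 1) s| = #{i | Θ i ≠ 0} := by
  rw [sum_abs_BmatS_mulVec hW hc]
  simp only [sub_self, abs_zero, ite_self, sum_const_zero, mul_zero, zero_add, abs_one, sum_boole]

theorem exists_gram_mulVec_eq_single (hW : ∀ k l : Fin K, k < l → W k l = 1) (hc : 0 < γ / μ)
    (hΘ : ∃ k, Θ k ≠ 0) {k : Fin K} (hk : Θ k = 0) :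
    ∃ w, ((BmatS K W γ μ Θ)ᵀ * BmatS K W γ μ Θ) *ᵥ w = Pi.single k 1 ∧
      ∑ s, |(BmatS K W γ μ Θ *ᵥ w) s| ≤ (γ / μ)⁻¹ + 1 := by
  set N : ℝ := ↑(#{i | Θ i ≠ 0})
  have hdeg : (#{i | Θ k ≠ Θ i} : ℝ) = N := by simp only [hk, ne_comm (a := (0 : ℝ)), N]
  have hN : 0 < N := by
    obtain ⟨i, hi⟩ := hΘ
    exact Nat.cast_pos.mpr (card_pos.mpr ⟨i, by simp [hi]⟩)
  refine ⟨((γ / μ) ^ 2 * N)⁻¹ • Pi.single k 1 + N⁻¹ • fun _ => 1, ?_, ?_⟩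
  · ext j
    simp only [mulVec_add, mulVec_smul, Pi.add_apply, Pi.smul_apply, smul_eq_mul,
      gram_mulVec_single hW hc.ne', gram_mulVec_one hW hc.ne']
    rw [hdeg, hk]
    generalize γ / μ = c at hc ⊢
    by_cases hjk : j = k
    · subst hjk
      simp only [hk, if_true, ne_eq, not_true_eq_false, and_false, if_false, sub_zero, add_zero,
        mul_zero, Pi.single_eq_same]
      field_simp
    · by_cases hj : Θ j = 0
      · simp [hjk, hj]
      · simp only [_root_.mul_inv_rev, hjk, ↓reduceIte, ne_eq, hj, not_false_eq_true, zero_sub,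
          mul_neg, mul_one, not_true_eq_false, and_self, add_zero, Pi.single_eq_of_ne]
        field_simp
        ring
  · calc _ ≤ |((γ / μ) ^ 2 * N)⁻¹| * ∑ s, |(BmatS K W γ μ Θ *ᵥ Pi.single k 1) s| +
          |N⁻¹| * ∑ s, |(BmatS K W γ μ Θ *ᵥ fun _ => 1) s| := by
          rw [mulVec_add, mulVec_smul, mulVec_smul]
          exact sum_abs_smul_add_smul_le _ _ _ _
      _ = (γ / μ)⁻¹ + 1 := by
          rw [sum_abs_BmatS_mulVec_single hW hc, sum_abs_BmatS_mulVec_one hW hc, hdeg, hk]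
          simp only [ne_self_iff_false, if_false, add_zero]
          generalize γ / μ = c at hc ⊢
          rw [abs_of_pos (by positivity), abs_of_pos (by positivity)]
          field_simp
          ring

theorem gram_mulVec_sub_single (hW : ∀ k l : Fin K, k < l → W k l = 1) (hc : γ / μ ≠ 0)
    {k l : Fin K} (hkl : k ≠ l) (hΘkl : Θ k = Θ l) :
    ((BmatS K W γ μ Θ)ᵀ * BmatS K W γ μ Θ) *ᵥ (Pi.single k 1 - Pi.single l 1) =
      ((γ / μ) ^ 2 * #{i | Θ k ≠ Θ i} + if Θ k ≠ 0 then 1 else 0) •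
        (Pi.single k 1 - Pi.single l 1) := by
  ext j
  rw [mulVec_sub, Pi.sub_apply, gram_mulVec_single hW hc, gram_mulVec_single hW hc, ← hΘkl]
  by_cases hjk : j = k
  · subst hjk
    simp [hkl]
  by_cases hjl : j = l
  · subst hjl
    simp [hjk, hΘkl]
  · simp [hjk, hjl]

theorem exists_gram_mulVec_eq_smul_sub_single (hW : ∀ k l : Fin K, k < l → W k l = 1)
    (hc : 0 < γ / μ) (hΘ : ∃ k, Θ k ≠ 0) {k l : Fin K} (hkl : k ≠ l) (hΘkl : Θ k = Θ l) :
    ∃ w, ((BmatS K W γ μ Θ)ᵀ * BmatS K W γ μ Θ) *ᵥ w =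
        (γ / μ) • (Pi.single k 1 - Pi.single l 1) ∧
      ∑ s, |(BmatS K W γ μ Θ *ᵥ w) s| ≤ 2 * max (γ / μ) 1 := by
  set d : ℝ := ↑(#{i | Θ k ≠ Θ i})
  set δ : ℝ := if Θ k ≠ 0 then 1 else 0
  have hd : 0 ≤ d := Nat.cast_nonneg _
  have hδ : 0 ≤ δ := by positivity
  have hD : 0 < (γ / μ) ^ 2 * d + δ := by
    by_cases h : Θ k = 0
    · obtain ⟨i, hi⟩ := hΘ
      have hd : 0 < d := Nat.cast_pos.mpr (card_pos.mpr ⟨i, by simp [h, Ne.symm hi]⟩)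
      positivity
    · simp only [δ, h, ne_eq, not_false_eq_true, if_true]
      positivity
  refine ⟨(γ / μ / ((γ / μ) ^ 2 * d + δ)) • (Pi.single k 1 - Pi.single l 1), ?_, ?_⟩
  · rw [mulVec_smul, gram_mulVec_sub_single hW hc.ne' hkl hΘkl, smul_smul,
      div_mul_cancel₀ _ hD.ne']
  · rw [mulVec_smul, mulVec_sub, smul_sub, sub_eq_add_neg, ← neg_smul]
    refine (sum_abs_smul_add_smul_le _ _ _ _).trans ?_
    rw [sum_abs_BmatS_mulVec_single hW hc, sum_abs_BmatS_mulVec_single hW hc, ← hΘkl, abs_neg,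
      abs_of_pos (by positivity)]
    generalize γ / μ = c at hc hD ⊢
    have key : c * (c * d + δ) ≤ max c 1 * (c ^ 2 * d + δ) := by
      have h₁ : c ^ 2 * d ≤ max c 1 * (c ^ 2 * d) :=
        le_mul_of_one_le_left (by positivity) (le_max_right c 1)
      have h₂ : c * δ ≤ max c 1 * δ := mul_le_mul_of_nonneg_right (le_max_left c 1) hδ
      linarith
    calc _ = 2 * (c * (c * d + δ) / (c ^ 2 * d + δ)) := by ring
      _ ≤ 2 * max c 1 := by
          gcongr
          exact (div_le_iff₀ hD).mpr key

theorem exists_gram_mulVec_eq_row_of_notMem_suppB (hW : ∀ k l : Fin K, k < l → W k l = 1)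
    (hc₁ : 1 ≤ γ / μ) (hc₂ : γ / μ ≤ 2) (hΘ : ∃ k, Θ k ≠ 0)
    {u : {p : Fin K × Fin K // p.1 < p.2} ⊕ Fin K} (hu : u ∉ suppB K W γ μ Θ) :
    ∃ w, ((BmatS K W γ μ Θ)ᵀ * BmatS K W γ μ Θ) *ᵥ w = Bmat K W γ μ u ∧
      ∑ s, |(BmatS K W γ μ Θ *ᵥ w) s| ≤ 4 := by
  have hc : 0 < γ / μ := one_pos.trans_le hc₁
  cases u with
  | inl p =>
    have hp : Θ p.1.1 = Θ p.1.2 := not_not.mp fun h => hu ((mem_suppB_inl hW hc.ne' p).mpr h)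
    obtain ⟨w, hw, hle⟩ := exists_gram_mulVec_eq_smul_sub_single hW hc hΘ p.2.ne hp
    refine ⟨w, hw.trans (Bmat_inl hW p).symm, hle.trans ?_⟩
    linarith [max_le hc₂ one_le_two]
  | inr k =>
    have hk : Θ k = 0 := not_not.mp fun h => hu ((mem_suppB_inr k).mpr h)
    obtain ⟨w, hw, hle⟩ := exists_gram_mulVec_eq_single hW hc hΘ hk
    refine ⟨w, hw.trans (Bmat_inr k).symm, hle.trans ?_⟩
    linarith [inv_le_one_of_one_le₀ hc₁]

end UnitWeights

/-- with all weights equal to 1 and `0 < μ ≤ γ ≤ 2μ`, for every row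
`u ∈ S_B^c` we have `‖B_{u:}(B_{S_B:}ᵀB_{S_B:})⁻¹B_{S_B:}ᵀ‖₁ ≤ 4`; equivalently
`‖B_{S_B^c:}B_{S_B:}†‖_∞ ≤ 4`, so that the compatibility constant satisfies `κ_IC ≤ 5`. -/
theorem compatibility_constant_bound
    (K : ℕ) (W : Fin K → Fin K → ℝ)
    (hWone : ∀ k l : Fin K, k < l → W k l = 1)
    (μ γ : ℝ) (hμ : 0 < μ) (hμγ : μ ≤ γ) (hγμ : γ ≤ 2 * μ)
    (Θ : Fin K → ℝ) (hΘ : ∃ k, Θ k ≠ 0) :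
    (∀ u, u ∉ suppB K W γ μ Θ →
      ∑ s : {x // x ∈ suppB K W γ μ Θ},
        |(((Bmat K W γ μ u) ᵥ* ((BmatS K W γ μ Θ)ᵀ * BmatS K W γ μ Θ)⁻¹) ᵥ*
            (BmatS K W γ μ Θ)ᵀ) s| ≤ 4) ∧
    ((⨆ r : {r // r ∉ suppB K W γ μ Θ},
        ∑ s : {x // x ∈ suppB K W γ μ Θ},
          |((Bmat K W γ μ r.val) ᵥ* (moorePenrose (BmatS K W γ μ Θ))) s|) ≤ 4) ∧
    ((⨆ r : {r // r ∉ suppB K W γ μ Θ},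
        ∑ s : {x // x ∈ suppB K W γ μ Θ},
          |((Bmat K W γ μ r.val) ᵥ* (moorePenrose (BmatS K W γ μ Θ))) s|) + 1 ≤ 5) := by
  have hc : 0 < γ / μ := div_pos (hμ.trans_le hμγ) hμ
  have hc₁ : 1 ≤ γ / μ := (one_le_div hμ).mpr hμγ
  have hc₂ : γ / μ ≤ 2 := (div_le_iff₀ hμ).mpr (by linarith)
  have hdet := isUnit_det_transpose_mul_self (BmatS_mulVec_injective hWone hc.ne' hΘ)
  have hrow : ∀ u, u ∉ suppB K W γ μ Θ →
      ∑ s : {x // x ∈ suppB K W γ μ Θ},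
        |(((Bmat K W γ μ u) ᵥ* ((BmatS K W γ μ Θ)ᵀ * BmatS K W γ μ Θ)⁻¹) ᵥ*
            (BmatS K W γ μ Θ)ᵀ) s| ≤ 4 := by
    intro u hu
    obtain ⟨w, hw, hle⟩ := exists_gram_mulVec_eq_row_of_notMem_suppB hWone hc₁ hc₂ hΘ hu
    rwa [vecMul_inv_transpose_mul_self_vecMul_transpose hdet hw]
  have hsup : (⨆ r : {r // r ∉ suppB K W γ μ Θ},
      ∑ s : {x // x ∈ suppB K W γ μ Θ},
        |((Bmat K W γ μ r.val) ᵥ* (moorePenrose (BmatS K W γ μ Θ))) s|) ≤ 4 := by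
    refine Real.iSup_le (fun r => ?_) (by norm_num)
    rw [moorePenrose_eq_inv_mul_transpose hdet, ← vecMul_vecMul]
    exact hrow r.1 r.2
  exact ⟨hrow, hsup, by linarith⟩
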